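/- Let γ > 0, c > 0 with 2c < γ, and set δ = √(γ² - 2cγ). Then for p ≤ t, the function u₁(t) = (b/c)(γ-δ) e^{-δ(t-p)} satisfies the integral equation u₁(t) = b e^{-γ(t-p)} + c ∫_p^∞ e^{-γ|t-s|} u₁(s) ds for every b ≥ 0. -/

import Mathlib

/-!
Splitting the integral at `s = t` leaves two elementary exponential integrals: over `[p, t]`
it contributes `(e^{-δ(t-p)} - e^{-γ(t-p)}) / (γ - δ)` and over `(t, ∞)` it contributes
`e^{-δ(t-p)} / (γ + δ)`. The `e^{-γ(t-p)}` terms then cancel against the forcing term, and the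
`e^{-δ(t-p)}` terms balance exactly because `(γ - δ)(γ + δ) = 2cγ`, which is the definition of `δ`.
-/

open Real MeasureTheory Set

theorem intervalIntegral_exp_mul {a : ℝ} (ha : a ≠ 0) (x y : ℝ) :
    ∫ s in x..y, exp (a * s) = (exp (a * y) - exp (a * x)) / a := by
  rw [intervalIntegral.integral_comp_mul_left (fun s => exp s) ha, integral_exp, smul_eq_mul,
    inv_mul_eq_div]

theorem intervalIntegral_exp_mul_sub_mul_exp_mul_sub {γ δ : ℝ} (h : γ ≠ δ) (p t : ℝ) :
    ∫ s in p..t, exp (-γ * (t - s)) * exp (-δ * (s - p))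
      = (exp (-δ * (t - p)) - exp (-γ * (t - p))) / (γ - δ) := by
  have hfactor : ∀ s, exp (-γ * (t - s)) * exp (-δ * (s - p))
      = exp (δ * p - γ * t) * exp ((γ - δ) * s) := fun s => by
    rw [← exp_add, ← exp_add]; ring_nf
  simp_rw [hfactor, intervalIntegral.integral_const_mul,
    intervalIntegral_exp_mul (sub_ne_zero.mpr h), mul_div_assoc', mul_sub, ← exp_add]
  ring_nf

theorem exp_mul_sub_mul_exp_mul_sub_eq {γ δ : ℝ} (p t s : ℝ) :
    exp (-γ * (s - t)) * exp (-δ * (s - p)) = exp (γ * t + δ * p) * exp (-(γ + δ) * s) := by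
  rw [← exp_add, ← exp_add]; ring_nf

theorem integrableOn_Ioi_exp_mul_sub_mul_exp_mul_sub {γ δ : ℝ} (h : 0 < γ + δ) (p t : ℝ) :
    IntegrableOn (fun s => exp (-γ * (s - t)) * exp (-δ * (s - p))) (Ioi t) := by
  simp_rw [exp_mul_sub_mul_exp_mul_sub_eq p t]
  exact (integrableOn_exp_mul_Ioi (by linarith) t).const_mul _

theorem integral_Ioi_exp_mul_sub_mul_exp_mul_sub {γ δ : ℝ} (h : 0 < γ + δ) (p t : ℝ) :
    ∫ s in Ioi t, exp (-γ * (s - t)) * exp (-δ * (s - p)) = exp (-δ * (t - p)) / (γ + δ) := by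
  simp_rw [exp_mul_sub_mul_exp_mul_sub_eq p t]
  rw [integral_const_mul, integral_exp_mul_Ioi (neg_neg_of_pos h), neg_div_neg_eq,
    mul_div_assoc', ← exp_add]
  ring_nf

theorem integral_Ici_exp_mul_abs_sub_mul_exp_mul_sub {γ δ p t : ℝ} (hne : γ ≠ δ)
    (hpos : 0 < γ + δ) (ht : p ≤ t) :
    ∫ s in Ici p, exp (-γ * |t - s|) * exp (-δ * (s - p))
      = (exp (-δ * (t - p)) - exp (-γ * (t - p))) / (γ - δ) + exp (-δ * (t - p)) / (γ + δ) := by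
  have habs_tail : EqOn (fun s => exp (-γ * |t - s|) * exp (-δ * (s - p)))
      (fun s => exp (-γ * (s - t)) * exp (-δ * (s - p))) (Ioi t) := fun s hs => by
    simp only [abs_sub_comm t s, abs_of_pos (sub_pos.mpr (mem_Ioi.mp hs))]
  have habs_near : EqOn (fun s => exp (-γ * |t - s|) * exp (-δ * (s - p)))
      (fun s => exp (-γ * (t - s)) * exp (-δ * (s - p))) (uIcc p t) := fun s hs => by
    simp only [abs_of_nonneg (sub_nonneg.mpr (uIcc_of_le ht ▸ hs).2)]
  have hcont : Continuous fun s => exp (-γ * |t - s|) * exp (-δ * (s - p)) := by fun_prop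
  rw [integral_Ici_eq_integral_Ioi, ← Ioc_union_Ioi_eq_Ioi ht,
    setIntegral_union (Ioc_disjoint_Ioi le_rfl) measurableSet_Ioi hcont.integrableOn_Ioc
      ((integrableOn_Ioi_exp_mul_sub_mul_exp_mul_sub hpos p t).congr_fun habs_tail.symm
        measurableSet_Ioi),
    ← intervalIntegral.integral_of_le ht, intervalIntegral.integral_congr habs_near,
    setIntegral_congr_fun measurableSet_Ioi habs_tail,
    intervalIntegral_exp_mul_sub_mul_exp_mul_sub hne, integral_Ioi_exp_mul_sub_mul_exp_mul_sub hpos]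

theorem u1_integral_equation_general
    (γ c p : ℝ) (hc : 0 < c) (h2c : 2 * c < γ)
    (δ : ℝ) (hδ : δ = Real.sqrt (γ ^ 2 - 2 * c * γ)) :
    ∀ b : ℝ, 0 ≤ b → ∀ t : ℝ, p ≤ t →
      (b / c) * (γ - δ) * Real.exp (-δ * (t - p))
        = b * Real.exp (-γ * (t - p))
          + c * ∫ s in Set.Ici p,
              Real.exp (-γ * |t - s|) * ((b / c) * (γ - δ) * Real.exp (-δ * (s - p))) := by
  intro b _ t ht
  have hδ_nonneg : 0 ≤ δ := hδ ▸ sqrt_nonneg _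
  have hδ_sq : δ ^ 2 = γ ^ 2 - 2 * c * γ := hδ ▸ sq_sqrt (by nlinarith)
  have hδ_lt : δ < γ := by nlinarith
  simp_rw [mul_left_comm (exp (-γ * |t - _|)), integral_const_mul,
    integral_Ici_exp_mul_abs_sub_mul_exp_mul_sub hδ_lt.ne' (by linarith) ht]
  have hγδ : (γ - δ) * (γ + δ) = 2 * c * γ := by linear_combination -hδ_sq
  have hγδ_sub : γ - δ ≠ 0 := by linarith
  have hγδ_add : γ + δ ≠ 0 := by linarith
  generalize exp (-δ * (t - p)) = x
  field_simp
  linear_combination (b * x) * hγδ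

/-- The function `u₁(t) = (b/c)(γ-δ) e^{-δ(t-p)}` solves the integral equation
`u₁(t) = b e^{-γ(t-p)} + c ∫_p^∞ e^{-γ|t-s|} u₁(s) ds` on `[p, ∞)`. -/
theorem u1_integral_equation
    (γ c p : ℝ) (hγ : 0 < γ) (hc : 0 < c) (h2c : 2 * c < γ)
    (δ : ℝ) (hδ : δ = Real.sqrt (γ ^ 2 - 2 * c * γ)) :
    ∀ b : ℝ, 0 ≤ b → ∀ t : ℝ, p ≤ t →
      (b / c) * (γ - δ) * Real.exp (-δ * (t - p))
        = b * Real.exp (-γ * (t - p))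
          + c * ∫ s in Set.Ici p,
              Real.exp (-γ * |t - s|) * ((b / c) * (γ - δ) * Real.exp (-δ * (s - p))) :=
  u1_integral_equation_general γ c p hc h2c δ hδ
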